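/- Fix α > 1 and let N₀ = 3·⌈α + 1⌉. For an integer n ≥ N₀ define n''' = ⌊n/(α + 1)⌋ + 1, n* = n − n''', n'' = ⌊n*/(α + 1)⌋ + 1, and n' = n* − n''. Then: (a) n = n' + n'' + n''' and n* = n' + n''; (b) α·(n''' − 3) ≤ n* < α·n'''; (c) α·(n'' − 3) ≤ n' < α·n''; (d) n''' ≥ 3; (e) n' ≥ 1 and n'' ≥ 1. -/

import Mathlib

/-- `n''' = ⌊n/(α+1)⌋ + 1`, the least integer greater than `n/(α+1)`. -/
noncomputable def nPPP (α : ℝ) (n : ℕ) : ℕ := ⌊(n : ℝ) / (α + 1)⌋₊ + 1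

/-- `n* = n − n'''`. -/
noncomputable def nStar (α : ℝ) (n : ℕ) : ℕ := n - nPPP α n

/-- `n'' = ⌊n*/(α+1)⌋ + 1`. -/
noncomputable def nPP (α : ℝ) (n : ℕ) : ℕ := ⌊(nStar α n : ℝ) / (α + 1)⌋₊ + 1

/-- `n' = n* − n''`. -/
noncomputable def nP (α : ℝ) (n : ℕ) : ℕ := nStar α n - nPP α n

/-!
Both splittings `n = n* + n'''` and `n* = n' + n''` are one step: for `k = ⌊m/(α+1)⌋ + 1`
one has `(α+1)(k-1) ≤ m < (α+1)k`, i.e. `α(k-1) - 1 ≤ m - k < αk`, and `α + 1 ≤ 3α` turns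
the lower bound into `α(k-3) ≤ m - k`; for `α ≥ 1` and `m ≥ 3` also `k < m`.
From `n ≥ 3(α+1)` we get `n''' ≥ 3` and `n* ≥ nα/(α+1) - 1 ≥ 3α - 1 > 2`, so the step
applies to `m = n` and then to `m = n*`.
-/

section FloorDivAddOne

variable {α : ℝ} {m k : ℕ}

theorem mul_pred_le_of_eq_floor_div_add_one (hα : 0 < α + 1)
    (hk : k = ⌊(m : ℝ) / (α + 1)⌋₊ + 1) : (α + 1) * ((k : ℝ) - 1) ≤ m := by
  have h : (⌊(m : ℝ) / (α + 1)⌋₊ : ℝ) ≤ m / (α + 1) := Nat.floor_le (by positivity)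
  rw [hk, Nat.cast_add_one, add_sub_cancel_right, mul_comm]
  exact (le_div_iff₀ hα).mp h

theorem lt_mul_of_eq_floor_div_add_one (hα : 0 < α + 1)
    (hk : k = ⌊(m : ℝ) / (α + 1)⌋₊ + 1) : (m : ℝ) < (α + 1) * k := by
  have h : (m : ℝ) / (α + 1) < ⌊(m : ℝ) / (α + 1)⌋₊ + 1 := Nat.lt_floor_add_one _
  rw [hk, Nat.cast_add_one, mul_comm]
  exact (div_lt_iff₀ hα).mp h

theorem lt_of_eq_floor_div_add_one (hα : 1 ≤ α) (hm : 3 ≤ m)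
    (hk : k = ⌊(m : ℝ) / (α + 1)⌋₊ + 1) : k < m := by
  have hle := mul_pred_le_of_eq_floor_div_add_one (by linarith) hk
  set q := ⌊(m : ℝ) / (α + 1)⌋₊
  have hq : (2 * q : ℝ) ≤ m := by
    rw [hk, Nat.cast_add_one, add_sub_cancel_right] at hle
    nlinarith [q.cast_nonneg (α := ℝ)]
  have : 2 * q ≤ m := by exact_mod_cast hq
  omega

theorem mul_sub_three_le_sub_of_eq_floor_div_add_one (hα : 1 / 2 ≤ α) (hkm : k ≤ m)
    (hk : k = ⌊(m : ℝ) / (α + 1)⌋₊ + 1) : α * ((k : ℝ) - 3) ≤ ((m - k : ℕ) : ℝ) := by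
  have hle := mul_pred_le_of_eq_floor_div_add_one (by linarith) hk
  rw [Nat.cast_sub hkm]
  linarith

theorem sub_lt_mul_of_eq_floor_div_add_one (hα : 0 < α + 1) (hkm : k ≤ m)
    (hk : k = ⌊(m : ℝ) / (α + 1)⌋₊ + 1) : ((m - k : ℕ) : ℝ) < α * k := by
  have hlt := lt_mul_of_eq_floor_div_add_one hα hk
  rw [Nat.cast_sub hkm]
  linarith

end FloorDivAddOne

section

variable {α : ℝ} {n : ℕ}

theorem three_le_nPPP (hα : 0 < α + 1) (hn : 3 * (α + 1) ≤ n) : 3 ≤ nPPP α n := by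
  have h : (3 : ℝ) ≤ n / (α + 1) := by rwa [le_div_iff₀ hα]
  have : 3 ≤ ⌊(n : ℝ) / (α + 1)⌋₊ := Nat.le_floor (by exact_mod_cast h)
  unfold nPPP
  omega

theorem three_le_nStar (hα : 1 < α) (hn : 3 * (α + 1) ≤ n) : 3 ≤ nStar α n := by
  have hn3 : 3 ≤ n := by exact_mod_cast (by nlinarith : (3 : ℝ) ≤ n)
  have hkn : nPPP α n < n := lt_of_eq_floor_div_add_one hα.le hn3 rfl
  have hle := mul_pred_le_of_eq_floor_div_add_one (k := nPPP α n) (by linarith) rfl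
  have hs : (nStar α n : ℝ) = n - nPPP α n := by
    rw [nStar, Nat.cast_sub hkn.le]
  have h2 : (2 : ℝ) < nStar α n := by
    rw [hs]; nlinarith
  exact_mod_cast h2

end

theorem nprimes_properties (α : ℝ) (hα : 1 < α) (n : ℕ)
    (hn : 3 * ⌈α + 1⌉₊ ≤ n) :
    (n = nP α n + nPP α n + nPPP α n ∧ nStar α n = nP α n + nPP α n) ∧
    (α * ((nPPP α n : ℝ) - 3) ≤ (nStar α n : ℝ) ∧
      (nStar α n : ℝ) < α * (nPPP α n : ℝ)) ∧
    (α * ((nPP α n : ℝ) - 3) ≤ (nP α n : ℝ) ∧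
      (nP α n : ℝ) < α * (nPP α n : ℝ)) ∧
    3 ≤ nPPP α n ∧
    (1 ≤ nP α n ∧ 1 ≤ nPP α n) := by
  have hα' : (0 : ℝ) < α + 1 := by linarith
  have hN : 3 * (α + 1) ≤ (n : ℝ) := by
    calc 3 * (α + 1) ≤ 3 * (⌈α + 1⌉₊ : ℝ) := by gcongr; exact Nat.le_ceil _
      _ ≤ n := by exact_mod_cast hn
  have hPPP3 := three_le_nPPP hα' hN
  have hStar3 := three_le_nStar hα hN
  have hn3 : 3 ≤ n := by exact_mod_cast (by linarith : (3 : ℝ) ≤ n)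
  have hPPP : nPPP α n < n := lt_of_eq_floor_div_add_one hα.le hn3 rfl
  have hPP : nPP α n < nStar α n := lt_of_eq_floor_div_add_one hα.le hStar3 rfl
  have hStar : nStar α n + nPPP α n = n := Nat.sub_add_cancel hPPP.le
  have hP : nP α n + nPP α n = nStar α n := Nat.sub_add_cancel hPP.le
  refine ⟨⟨by omega, by omega⟩, ⟨?_, ?_⟩, ⟨?_, ?_⟩, hPPP3, by omega, Nat.succ_pos _⟩
  · exact mul_sub_three_le_sub_of_eq_floor_div_add_one (by linarith) hPPP.le rfl
  · exact sub_lt_mul_of_eq_floor_div_add_one hα' hPPP.le rfl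
  · exact mul_sub_three_le_sub_of_eq_floor_div_add_one (by linarith) hPP.le rfl
  · exact sub_lt_mul_of_eq_floor_div_add_one hα' hPP.le rfl
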